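/- Let m, n be positive integers, let r ≤ s ≤ min(m,n), let A be a complex m×n matrix of rank r with singular values σ_1 ≥ … ≥ σ_r > 0, and let B be a complex m×n matrix of rank s with singular values σ̂_1 ≥ … ≥ σ̂_s > 0. Then ‖A Bᴴ‖_F ≤ sqrt( (Σ_{j=1}^r σ_j² σ̂_j²) / ( Σ_{j=1}^r σ_j⁴ + Σ_{j=1}^s σ̂_j⁴ + 2 Σ_{j=1}^r σ_j² σ̂_j² ) ) · ‖ |A|² + |B|² ‖_F, where |A|² = AᴴA and |B|² = BᴴB. -/

import Mathlib

open scoped BigOperators Matrix ComplexOrder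

noncomputable def frob {m n : ℕ} (A : Matrix (Fin m) (Fin n) ℂ) : ℝ :=
  Real.sqrt (∑ i, ∑ j, ‖A i j‖ ^ 2)

noncomputable def absMat {m n : ℕ} (A : Matrix (Fin m) (Fin n) ℂ) :
    Matrix (Fin n) (Fin n) ℂ :=
  ((Matrix.posSemidef_conjTranspose_mul_self A).1.eigenvectorUnitary : Matrix (Fin n) (Fin n) ℂ) *
    Matrix.diagonal (((↑) : ℝ → ℂ) ∘ (√·) ∘ (Matrix.posSemidef_conjTranspose_mul_self A).1.eigenvalues) *
    (star (Matrix.posSemidef_conjTranspose_mul_self A).1.eigenvectorUnitary : Matrix (Fin n) (Fin n) ℂ)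

noncomputable def svdMat (m n r : ℕ) (σ : ℕ → ℝ) : Matrix (Fin m) (Fin n) ℂ :=
  Matrix.of fun i j =>
    if (i : ℕ) = (j : ℕ) ∧ (i : ℕ) < r then ((σ ((i : ℕ) + 1) : ℝ) : ℂ) else 0

/-- `A` admits a singular value decomposition with singular values
`σ 1, …, σ r` (indexed from 1) on the diagonal. -/
def HasSVD {m n : ℕ} (A : Matrix (Fin m) (Fin n) ℂ) (r : ℕ) (σ : ℕ → ℝ) : Prop :=
  ∃ (U : Matrix (Fin m) (Fin m) ℂ) (V : Matrix (Fin n) (Fin n) ℂ),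
    Uᴴ * U = 1 ∧ U * Uᴴ = 1 ∧ Vᴴ * V = 1 ∧ V * Vᴴ = 1 ∧
    A = U * svdMat m n r σ * Vᴴ

/-- `σ 1 ≥ σ 2 ≥ … ≥ σ r > 0`. -/
def SingVals (r : ℕ) (σ : ℕ → ℝ) : Prop :=
  (∀ j, 1 ≤ j → j ≤ r → 0 < σ j) ∧ ∀ j, 1 ≤ j → j < r → σ (j + 1) ≤ σ j

/-- Generalized polar decomposition: `A = Q * |A|`, where `Q` is a rank-`r` partial
isometry such that the column space of `Qᴴ` equals the column space of `|A|`. -/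
def IsPolar {m n : ℕ} (A Q : Matrix (Fin m) (Fin n) ℂ) (r : ℕ) : Prop :=
  A = Q * absMat A ∧ Q * Qᴴ * Q = Q ∧ Q.rank = r ∧
    LinearMap.range (Matrix.mulVecLin Qᴴ) =
      LinearMap.range (Matrix.mulVecLin (absMat A))

/-!
Diagonalise `|A|² = V diag(a) Vᴴ` and `|B|² = V' diag(b) V'ᴴ`, where `a`, `b` are the squared
singular values padded by zeros. Then `‖A Bᴴ‖_F² = tr(|A|²|B|²) = ∑ᵢⱼ aᵢ bⱼ |Wᵢⱼ|²` for the unitary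
`W = Vᴴ V'`, and `(|Wᵢⱼ|²)` is doubly stochastic. By Birkhoff's theorem this linear expression in
`(|Wᵢⱼ|²)` is largest at a permutation matrix, where the rearrangement inequality bounds it by
`∑ⱼ aⱼ bⱼ` (von Neumann's trace inequality). Since
`‖|A|² + |B|²‖_F² = ‖a‖² + ‖b‖² + 2 tr(|A|²|B|²)` and `t ↦ t / (c + 2t)` is increasing, the
bound follows.
-/

open Finset Matrix

section TraceInequality

variable {n : Type*} [Fintype n] [DecidableEq n]

theorem Monovary.dotProduct_mulVec_le_of_mem_doublyStochastic {a b : n → ℝ} (hab : Monovary a b)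
    {M : Matrix n n ℝ} (hM : M ∈ doublyStochastic ℝ n) : a ⬝ᵥ (M *ᵥ b) ≤ a ⬝ᵥ b := by
  have hlin : IsLinearMap ℝ fun M : Matrix n n ℝ => a ⬝ᵥ (M *ᵥ b) :=
    ⟨fun M N => by rw [add_mulVec, dotProduct_add],
     fun c M => by rw [smul_mulVec, dotProduct_smul]⟩
  rw [← SetLike.mem_coe, doublyStochastic_eq_convexHull_permMatrix] at hM
  refine convexHull_min ?_ (convex_halfSpace_le hlin _) hM
  rintro _ ⟨π, rfl⟩
  simpa [permMatrix_mulVec, dotProduct] using hab.sum_mul_comp_perm_le_sum_mul (σ := π)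

theorem mem_doublyStochastic_of_mem_unitaryGroup {W : Matrix n n ℂ} (hW : W ∈ unitaryGroup n ℂ) :
    (of fun i j => ‖W i j‖ ^ 2) ∈ doublyStochastic ℝ n := by
  have hrow : ∀ (M : Matrix n n ℂ), M * Mᴴ = 1 → ∀ i, ∑ j, ‖M i j‖ ^ 2 = 1 := by
    intro M hM i
    have := congrArg (fun N : Matrix n n ℂ => (N i i).re) hM
    simpa [mul_apply, Complex.mul_conj, Complex.normSq_eq_norm_sq, ← Complex.ofReal_pow] using this
  refine mem_doublyStochastic_iff_sum.2
    ⟨fun i j => by simp only [of_apply]; positivity, hrow W (mem_unitaryGroup_iff.1 hW), fun j => ?_⟩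
  simpa using hrow Wᴴ (by simpa [star_eq_conjTranspose] using mem_unitaryGroup_iff'.1 hW) j

theorem re_trace_diagonal_mul_diagonal_mul_conjTranspose (a b : n → ℝ) (W : Matrix n n ℂ) :
    (diagonal (fun i => (a i : ℂ)) * W * diagonal (fun i => (b i : ℂ)) * Wᴴ).trace.re =
      a ⬝ᵥ (of (fun i j => ‖W i j‖ ^ 2) *ᵥ b) := by
  simp only [trace, diag_apply, mul_apply, diagonal_apply, conjTranspose_apply, dotProduct, mulVec,
    of_apply, ite_mul, zero_mul, mul_ite, mul_zero, sum_ite_eq, sum_ite_eq', mem_univ, if_true,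
    Finset.mul_sum, Complex.re_sum]
  refine sum_congr rfl fun i _ => sum_congr rfl fun j _ => ?_
  rw [Complex.sq_norm, Complex.normSq_apply]
  simp only [RCLike.star_def, Complex.mul_re, Complex.mul_im, Complex.ofReal_re,
    Complex.ofReal_im, Complex.conj_re, Complex.conj_im]
  ring

theorem re_trace_conj_diagonal_mul_conj_diagonal (a b : n → ℝ) (V V' : Matrix n n ℂ) :
    (V * diagonal (fun i => (a i : ℂ)) * Vᴴ * (V' * diagonal (fun i => (b i : ℂ)) * V'ᴴ)).trace.re =
      a ⬝ᵥ (of (fun i j => ‖(Vᴴ * V') i j‖ ^ 2) *ᵥ b) := by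
  rw [← re_trace_diagonal_mul_diagonal_mul_conjTranspose, conjTranspose_mul,
    conjTranspose_conjTranspose]
  congr 1
  simp only [Matrix.mul_assoc]
  rw [trace_mul_comm V]
  simp only [Matrix.mul_assoc]

theorem re_trace_conj_diagonal_mul_conj_diagonal_le {a b : n → ℝ} (hab : Monovary a b)
    {V V' : Matrix n n ℂ} (hV : V ∈ unitaryGroup n ℂ) (hV' : V' ∈ unitaryGroup n ℂ) :
    (V * diagonal (fun i => (a i : ℂ)) * Vᴴ * (V' * diagonal (fun i => (b i : ℂ)) * V'ᴴ)).trace.re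
      ≤ a ⬝ᵥ b := by
  rw [re_trace_conj_diagonal_mul_conj_diagonal]
  exact hab.dotProduct_mulVec_le_of_mem_doublyStochastic
    (mem_doublyStochastic_of_mem_unitaryGroup (mul_mem (Unitary.star_mem hV) hV'))

theorem re_trace_conj_diagonal_sq (a : n → ℝ) {V : Matrix n n ℂ} (hV : V ∈ unitaryGroup n ℂ) :
    (V * diagonal (fun i => (a i : ℂ)) * Vᴴ * (V * diagonal (fun i => (a i : ℂ)) * Vᴴ)).trace.re
      = a ⬝ᵥ a := by
  rw [re_trace_conj_diagonal_mul_conj_diagonal, ← star_eq_conjTranspose,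
    Unitary.star_mul_self_of_mem hV]
  have hone : (of fun i j => ‖(1 : Matrix n n ℂ) i j‖ ^ 2) = 1 := by
    ext i j
    by_cases hij : i = j <;> simp [one_apply, hij]
  rw [hone, one_mulVec]

end TraceInequality

theorem frob_eq_sqrt_re_trace {m n : ℕ} (M : Matrix (Fin m) (Fin n) ℂ) :
    frob M = √(Mᴴ * M).trace.re := by
  rw [frob, Finset.sum_comm]
  simp [trace, mul_apply, Complex.re_sum, Complex.conj_mul', ← Complex.ofReal_pow]

theorem frob_mul_conjTranspose {m n : ℕ} (A B : Matrix (Fin m) (Fin n) ℂ) :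
    frob (A * Bᴴ) = √(Aᴴ * A * (Bᴴ * B)).trace.re := by
  rw [frob_eq_sqrt_re_trace, conjTranspose_mul, conjTranspose_conjTranspose,
    ← trace_mul_cycle, Matrix.mul_assoc, Matrix.mul_assoc, Matrix.mul_assoc]

theorem frob_add_of_isHermitian {n : ℕ} {X Y : Matrix (Fin n) (Fin n) ℂ} (hX : X.IsHermitian)
    (hY : Y.IsHermitian) :
    frob (X + Y) = √((X * X).trace.re + (Y * Y).trace.re + 2 * (X * Y).trace.re) := by
  rw [frob_eq_sqrt_re_trace, conjTranspose_add, hX.eq, hY.eq, add_mul, mul_add, mul_add,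
    trace_add, trace_add, trace_add, trace_mul_comm Y X]
  congr 1
  simp only [Complex.add_re]
  ring

def sqSingVec (n r : ℕ) (σ : ℕ → ℝ) : Fin n → ℝ :=
  fun k => if (k : ℕ) < r then σ (k + 1) ^ 2 else 0

theorem svdMat_conjTranspose_mul_self {m n r : ℕ} (hrm : r ≤ m) (σ : ℕ → ℝ) :
    (svdMat m n r σ)ᴴ * svdMat m n r σ = diagonal (fun k => (sqSingVec n r σ k : ℂ)) := by
  ext i j
  rw [mul_apply, diagonal_apply]
  by_cases hi : (i : ℕ) < r
  · rw [sum_eq_single ⟨i, hi.trans_le hrm⟩]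
    · by_cases hij : i = j
      · subst hij
        simp [svdMat, sqSingVec, hi, sq]
      · simp [svdMat, Fin.val_inj, hij]
    · intro l _ hl
      have hli : (l : ℕ) ≠ i := fun h => hl (Fin.ext h)
      simp [svdMat, hli]
    · simp
  · rw [sum_eq_zero fun l _ => ?_]
    · simp [sqSingVec, hi]
    · by_cases hli : (l : ℕ) = i <;> simp [svdMat, hli, hi]

theorem HasSVD.conjTranspose_mul_self_eq {m n r : ℕ} {A : Matrix (Fin m) (Fin n) ℂ} {σ : ℕ → ℝ}
    (hA : HasSVD A r σ) (hrm : r ≤ m) :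
    ∃ V ∈ unitaryGroup (Fin n) ℂ,
      Aᴴ * A = V * diagonal (fun k => (sqSingVec n r σ k : ℂ)) * Vᴴ := by
  obtain ⟨U, V, hU, -, -, hV, rfl⟩ := hA
  refine ⟨V, mem_unitaryGroup_iff.2 hV, ?_⟩
  rw [← svdMat_conjTranspose_mul_self hrm]
  simp only [conjTranspose_mul, conjTranspose_conjTranspose, Matrix.mul_assoc]
  rw [← Matrix.mul_assoc Uᴴ, hU, Matrix.one_mul]

theorem SingVals.antitoneOn {r : ℕ} {σ : ℕ → ℝ} (hσ : SingVals r σ) :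
    AntitoneOn σ (Set.Icc 1 r) :=
  antitoneOn_of_succ_le Set.ordConnected_Icc fun a _ ha hsa => by
    rw [Order.succ_eq_add_one] at hsa ⊢
    exact hσ.2 a ha.1 (by simp only [Set.mem_Icc] at hsa; omega)

theorem SingVals.antitone_sqSingVec {r : ℕ} {σ : ℕ → ℝ} (hσ : SingVals r σ) (n : ℕ) :
    Antitone (sqSingVec n r σ) := by
  intro k l hkl
  rw [Fin.le_iff_val_le_val] at hkl
  simp only [sqSingVec]
  split_ifs with hl hk hk
  · exact pow_le_pow_left₀ (hσ.1 _ (by omega) (by omega)).le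
      (hσ.antitoneOn ⟨by omega, by omega⟩ ⟨by omega, by omega⟩ (by omega)) 2
  · omega
  · positivity
  · rfl

theorem sum_fin_ite_lt_eq_sum_Icc {M : Type*} [AddCommMonoid M] {n r : ℕ} (hrn : r ≤ n)
    (f : ℕ → M) :
    ∑ k : Fin n, (if (k : ℕ) < r then f (k + 1) else 0) = ∑ j ∈ Icc 1 r, f j := by
  rw [Fin.sum_univ_eq_sum_range (fun k => if k < r then f (k + 1) else 0), ← sum_filter,
    show (range n).filter (· < r) = range r by ext; simp only [mem_filter, mem_range]; omega,
    ← Finset.Ico_add_one_right_eq_Icc, sum_Ico_eq_sum_range]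
  simp [add_comm]

theorem sqSingVec_dotProduct {n r s : ℕ} (hrs : r ≤ s) (hsn : s ≤ n) (σ σh : ℕ → ℝ) :
    sqSingVec n r σ ⬝ᵥ sqSingVec n s σh = ∑ j ∈ Icc 1 r, σ j ^ 2 * σh j ^ 2 := by
  rw [← sum_fin_ite_lt_eq_sum_Icc (hrs.trans hsn)]
  refine sum_congr rfl fun k _ => ?_
  simp only [sqSingVec]
  split_ifs <;> first | omega | simp

theorem sqSingVec_dotProduct_self {n r : ℕ} (hrn : r ≤ n) (σ : ℕ → ℝ) :
    sqSingVec n r σ ⬝ᵥ sqSingVec n r σ = ∑ j ∈ Icc 1 r, σ j ^ 4 := by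
  rw [sqSingVec_dotProduct le_rfl hrn]
  exact sum_congr rfl fun j _ => by ring

theorem Real.sqrt_le_sqrt_div_mul_sqrt {t S c : ℝ} (htS : t ≤ S) (hc : 0 ≤ c) :
    √t ≤ √(S / (c + 2 * S)) * √(c + 2 * t) := by
  rcases le_or_gt t 0 with ht | ht
  · rw [Real.sqrt_eq_zero_of_nonpos ht]
    exact mul_nonneg (Real.sqrt_nonneg _) (Real.sqrt_nonneg _)
  rw [← Real.sqrt_mul (div_nonneg (by linarith) (by linarith))]
  apply Real.sqrt_le_sqrt
  rw [div_mul_eq_mul_div, le_div_iff₀ (by linarith)]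
  nlinarith

theorem stronger_AM_GM_general
    (m n r s : ℕ) (hrs : r ≤ s) (hsmn : s ≤ min m n)
    (A B : Matrix (Fin m) (Fin n) ℂ)
    (σ σh : ℕ → ℝ) (hσ : SingVals r σ) (hσh : SingVals s σh)
    (hA : HasSVD A r σ) (hB : HasSVD B s σh) :
    frob (A * Bᴴ) ≤
      Real.sqrt ((∑ j ∈ Finset.Icc 1 r, σ j ^ 2 * σh j ^ 2) /
        (∑ j ∈ Finset.Icc 1 r, σ j ^ 4 + ∑ j ∈ Finset.Icc 1 s, σh j ^ 4 +
          2 * ∑ j ∈ Finset.Icc 1 r, σ j ^ 2 * σh j ^ 2)) *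
      frob (Aᴴ * A + Bᴴ * B) := by
  have hsm : s ≤ m := hsmn.trans (min_le_left m n)
  have hsn : s ≤ n := hsmn.trans (min_le_right m n)
  obtain ⟨V, hV, hAA⟩ := hA.conjTranspose_mul_self_eq (hrs.trans hsm)
  obtain ⟨V', hV', hBB⟩ := hB.conjTranspose_mul_self_eq hsm
  have hcross : (Aᴴ * A * (Bᴴ * B)).trace.re ≤ ∑ j ∈ Icc 1 r, σ j ^ 2 * σh j ^ 2 := by
    rw [hAA, hBB, ← sqSingVec_dotProduct hrs hsn]
    exact re_trace_conj_diagonal_mul_conj_diagonal_le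
      ((hσ.antitone_sqSingVec n).monovary (hσh.antitone_sqSingVec n)) hV hV'
  have hAA_sq : (Aᴴ * A * (Aᴴ * A)).trace.re = ∑ j ∈ Icc 1 r, σ j ^ 4 := by
    rw [hAA, re_trace_conj_diagonal_sq _ hV, sqSingVec_dotProduct_self (hrs.trans hsn)]
  have hBB_sq : (Bᴴ * B * (Bᴴ * B)).trace.re = ∑ j ∈ Icc 1 s, σh j ^ 4 := by
    rw [hBB, re_trace_conj_diagonal_sq _ hV', sqSingVec_dotProduct_self hsn]
  rw [frob_mul_conjTranspose, frob_add_of_isHermitian (isHermitian_conjTranspose_mul_self A)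
    (isHermitian_conjTranspose_mul_self B), hAA_sq, hBB_sq]
  exact Real.sqrt_le_sqrt_div_mul_sqrt hcross (by positivity)

theorem stronger_AM_GM
    (m n r s : ℕ) (hm : 0 < m) (hn : 0 < n) (hrs : r ≤ s) (hsmn : s ≤ min m n)
    (A B : Matrix (Fin m) (Fin n) ℂ)
    (σ σh : ℕ → ℝ) (hσ : SingVals r σ) (hσh : SingVals s σh)
    (hA : HasSVD A r σ) (hB : HasSVD B s σh)
    (hrankA : A.rank = r) (hrankB : B.rank = s) :
    frob (A * Bᴴ) ≤
      Real.sqrt ((∑ j ∈ Finset.Icc 1 r, σ j ^ 2 * σh j ^ 2) /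
        (∑ j ∈ Finset.Icc 1 r, σ j ^ 4 + ∑ j ∈ Finset.Icc 1 s, σh j ^ 4 +
          2 * ∑ j ∈ Finset.Icc 1 r, σ j ^ 2 * σh j ^ 2)) *
      frob (Aᴴ * A + Bᴴ * B) :=
  stronger_AM_GM_general m n r s hrs hsmn A B σ σh hσ hσh hA hB
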